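/- arXiv:2507.23641 — 3 statements merged into one kernel-verified Lean document; each statement's English description precedes it below -/
import Mathlib

section
/- (Thue's lemma) Let γ, b, a*, t* be nonnegative integers with 0 < a* < γ < a*·t*. Then there exist integers a, t with |a| < a*, 0 < |t| < t*, and a ≡ b·t (mod γ). -/
/-!
Pigeonhole: the `a* t*` pairs `(x, y)` with `0 ≤ x < a*`, `0 ≤ y < t*` leave only `γ` residues
for `x - b y` modulo `γ`, so two distinct pairs share one. Their difference `(a, t)` satisfies
`a ≡ b t`, `|a| < a*` and `|t| < t*`; and `t ≠ 0`, since otherwise the two pairs would have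
first coordinates in `[0, γ)` that are congruent modulo `γ`, hence equal.
-/

open Finset

namespace Int

theorem ModEq.eq_of_nonneg_of_lt {n a b : ℤ} (h : a ≡ b [ZMOD n]) (ha₀ : 0 ≤ a) (ha : a < n)
    (hb₀ : 0 ≤ b) (hb : b < n) : a = b := by
  rwa [ModEq, emod_eq_of_lt ha₀ ha, emod_eq_of_lt hb₀ hb] at h

theorem exists_ne_sub_mul_modEq_of_lt_mul {γ A T : ℤ} (b : ℤ) (hγ : 0 < γ) (hA : 0 ≤ A)
    (hT : 0 ≤ T) (h : γ < A * T) :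
    ∃ p ∈ Ico 0 A ×ˢ Ico 0 T, ∃ q ∈ Ico 0 A ×ˢ Ico 0 T,
      p ≠ q ∧ p.1 - b * p.2 ≡ q.1 - b * q.2 [ZMOD γ] := by
  have hcard : #(Ico 0 γ) < #(Ico 0 A ×ˢ Ico 0 T) := by
    rw [← Nat.cast_lt (α := ℤ), card_product, Nat.cast_mul, card_Ico_of_le _ _ hγ.le,
      card_Ico_of_le _ _ hA, card_Ico_of_le _ _ hT]
    simpa using h
  refine exists_ne_map_eq_of_card_lt_of_maps_to hcard (f := fun p ↦ (p.1 - b * p.2) % γ) ?_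
  intro p _
  simp only [coe_Ico, Set.mem_Ico]
  exact ⟨emod_nonneg _ hγ.ne', emod_lt_of_pos _ hγ⟩

end Int

theorem thue_lemma_general (γ b astar tstar : ℤ)
    (h1 : 0 < astar) (h2 : astar < γ) (h3 : γ < astar * tstar) :
    ∃ a t : ℤ, |a| < astar ∧ 0 < |t| ∧ |t| < tstar ∧ a ≡ b * t [ZMOD γ] := by
  have hγ : 0 < γ := h1.trans h2
  have htstar : 0 ≤ tstar := (pos_of_mul_pos_right (hγ.trans h3) h1.le).le
  obtain ⟨p, hp, q, hq, hpq, hmod⟩ :=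
    Int.exists_ne_sub_mul_modEq_of_lt_mul b hγ h1.le htstar h3
  simp only [mem_product, mem_Ico] at hp hq
  have hdiff : p.1 - q.1 ≡ b * (p.2 - q.2) [ZMOD γ] :=
    Int.modEq_iff_dvd.2 (by convert Int.modEq_iff_dvd.1 hmod using 1; ring)
  have hsnd : p.2 ≠ q.2 := by
    intro h
    have hfst : p.1 ≡ q.1 [ZMOD γ] := by simpa [h] using hmod.add_right (b * q.2)
    exact hpq (Prod.ext (hfst.eq_of_nonneg_of_lt hp.1.1 (by omega) hq.1.1 (by omega)) h)
  refine ⟨p.1 - q.1, p.2 - q.2, ?_, abs_pos.2 (sub_ne_zero.2 hsnd), ?_, hdiff⟩ <;>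
    rw [abs_lt] <;> omega

/-- **Thue's lemma.** Let `γ, b, a*, t*` be nonnegative integers with
`0 < a* < γ < a* · t*`. Then there exist integers `a, t` with `|a| < a*`,
`0 < |t| < t*` and `a ≡ b·t (mod γ)`. -/
theorem thue_lemma (γ b astar tstar : ℤ) (hγ : 0 ≤ γ) (hb : 0 ≤ b)
    (hastar : 0 ≤ astar) (htstar : 0 ≤ tstar)
    (h1 : 0 < astar) (h2 : astar < γ) (h3 : γ < astar * tstar) :
    ∃ a t : ℤ, |a| < astar ∧ 0 < |t| ∧ |t| < tstar ∧ a ≡ b * t [ZMOD γ] :=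
  thue_lemma_general γ b astar tstar h1 h2 h3
end

section
/- (Lenstra) Let b_1, …, b_n ∈ F_q[x]^n be a basis of the lattice L (the F_q[x]-span of b_1, …, b_n) with orthogonality defect 0, i.e., Σ_{i=1}^n |b_i| = deg(det B) where B is the matrix with rows b_1, …, b_n, and assume |b_1| ≤ |b_2| ≤ … ≤ |b_n|. Then b_1 is a shortest nonzero vector of L: for every nonzero v ∈ L one has |v| ≥ |b_1|. -/
open Polynomial

/-- The degree-norm of a vector of polynomials: `|a| = max_i deg(a_i)`,
valued in `WithBot ℕ` (with `deg 0 = ⊥` playing the role of `-∞`). -/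
def degNorm {F : Type*} [Field F] {n : ℕ} (v : Fin n → Polynomial F) : WithBot ℕ :=
  Finset.univ.sup fun i => (v i).degree

/-!
Let `d_i = |b_i|` and let `L` be the matrix over `F` whose `i`-th row is the coefficient of
`x ^ d_i` in `b_i`. Expanding the determinant shows `det L` is the coefficient of `x ^ (Σ d_i)`
in `det B`, so orthogonality defect `0` says exactly that `L` is invertible. For
`v = Σ c_i b_i` put `m = max_i (deg c_i + d_i)`: the coefficient of `x ^ m` in `v` is `u L`,
where `u_i` is the coefficient of `x ^ (m - d_i)` in `c_i`. Since `u ≠ 0` (it contains the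
leading coefficient of a `c_i` attaining the maximum), `u L ≠ 0`, hence
`|v| ≥ m ≥ d_i ≥ d_1` for any `i` with `c_i ≠ 0`.
-/

theorem Polynomial.coeff_prod_sum_of_natDegree_le {R ι : Type*} [CommSemiring R]
    (s : Finset ι) (p : ι → R[X]) (e : ι → ℕ) (h : ∀ i ∈ s, (p i).natDegree ≤ e i) :
    (∏ i ∈ s, p i).coeff (∑ i ∈ s, e i) = ∏ i ∈ s, (p i).coeff (e i) := by
  induction s using Finset.cons_induction with
  | empty => simp
  | cons a s ha ih =>
    have hs : ∀ i ∈ s, (p i).natDegree ≤ e i := fun i hi => h i (Finset.mem_cons_of_mem hi)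
    rw [Finset.prod_cons, Finset.sum_cons, coeff_mul_add_eq_of_natDegree_le
      (h a (Finset.mem_cons_self a s))
      ((natDegree_prod_le s p).trans (Finset.sum_le_sum hs)), ih hs, Finset.prod_cons]

theorem Polynomial.coeff_mul_of_natDegree_add_le {R : Type*} [Semiring R] {p q : R[X]}
    {e m : ℕ} (hp : p.natDegree + e ≤ m) (hq : q.natDegree ≤ e) :
    (p * q).coeff m = p.coeff (m - e) * q.coeff e := by
  have := coeff_mul_add_eq_of_natDegree_le (f := p) (df := m - e) (by omega) hq
  rwa [Nat.sub_add_cancel (le_of_add_le_right hp)] at this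

section RowDegree

variable {n : ℕ}

def natDegNorm {R : Type*} [Semiring R] (v : Fin n → R[X]) : ℕ :=
  Finset.univ.sup fun j => (v j).natDegree

theorem natDegree_le_natDegNorm {R : Type*} [Semiring R] (v : Fin n → R[X]) (j : Fin n) :
    (v j).natDegree ≤ natDegNorm v :=
  Finset.le_sup (f := fun j => (v j).natDegree) (Finset.mem_univ j)

theorem degree_le_degNorm {K : Type*} [Field K] (v : Fin n → K[X]) (j : Fin n) :
    (v j).degree ≤ degNorm v :=
  Finset.le_sup (f := fun j => (v j).degree) (Finset.mem_univ j)

theorem degNorm_eq_natDegNorm {K : Type*} [Field K] {v : Fin n → K[X]} (hv : v ≠ 0) :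
    degNorm v = natDegNorm v := by
  refine le_antisymm (Finset.sup_le fun j _ => degree_le_natDegree.trans ?_) ?_
  · exact WithBot.coe_le_coe.2 (natDegree_le_natDegNorm v j)
  obtain ⟨k, hk⟩ := Function.ne_iff.mp hv
  obtain ⟨j, -, hj⟩ := Finset.exists_mem_eq_sup Finset.univ ⟨k, Finset.mem_univ k⟩
    fun j => (v j).natDegree
  rw [natDegNorm, hj]
  by_cases hvj : v j = 0
  · rw [hvj, natDegree_zero]
    exact (zero_le_degree_iff.2 hk).trans (degree_le_degNorm v k)
  · exact (degree_eq_natDegree hvj).ge.trans (degree_le_degNorm v j)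

def leadingCoeffMatrix {R : Type*} [Semiring R] (b : Fin n → Fin n → R[X]) :
    Matrix (Fin n) (Fin n) R :=
  Matrix.of fun i j => (b i j).coeff (natDegNorm (b i))

theorem det_leadingCoeffMatrix {R : Type*} [CommRing R] (b : Fin n → Fin n → R[X]) :
    (leadingCoeffMatrix b).det = (Matrix.of b).det.coeff (∑ i, natDegNorm (b i)) := by
  rw [Matrix.det_apply, Matrix.det_apply, finsetSum_coeff]
  refine Finset.sum_congr rfl fun σ _ => ?_
  rw [coeff_smul, ← Equiv.sum_comp σ]
  simp only [Matrix.of_apply, leadingCoeffMatrix]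
  rw [coeff_prod_sum_of_natDegree_le _ _ _ fun i _ => natDegree_le_natDegNorm (b (σ i)) i]

theorem det_leadingCoeffMatrix_ne_zero {K : Type*} [Field K] {b : Fin n → Fin n → K[X]}
    (hb : ∀ i, b i ≠ 0) (hred : ∑ i, degNorm (b i) = (Matrix.of b).det.degree) :
    (leadingCoeffMatrix b).det ≠ 0 := by
  rw [det_leadingCoeffMatrix]
  refine coeff_ne_zero_of_eq_degree ?_
  simp only [← hred, degNorm_eq_natDegNorm (hb _), Nat.cast_sum]

theorem coeff_sum_smul_eq_vecMul_leadingCoeffMatrix {R : Type*} [Semiring R]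
    (b : Fin n → Fin n → R[X]) (c : Fin n → R[X]) {m : ℕ}
    (hm : ∀ i, c i ≠ 0 → (c i).natDegree + natDegNorm (b i) ≤ m) (j : Fin n) :
    ((∑ i, c i • b i) j).coeff m =
      Matrix.vecMul (fun i => (c i).coeff (m - natDegNorm (b i))) (leadingCoeffMatrix b) j := by
  simp only [Finset.sum_apply, Pi.smul_apply, smul_eq_mul, finsetSum_coeff, Matrix.vecMul,
    dotProduct]
  refine Finset.sum_congr rfl fun i _ => ?_
  by_cases hci : c i = 0
  · simp [hci]
  · exact coeff_mul_of_natDegree_add_le (hm i hci) (natDegree_le_natDegNorm (b i) j)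

/-- One half of the predictable degree property of row-reduced bases. -/
theorem natDegree_add_natDegNorm_le_degNorm_sum_smul {K : Type*} [Field K]
    {b : Fin n → Fin n → K[X]} (hL : (leadingCoeffMatrix b).det ≠ 0) (c : Fin n → K[X])
    {i : Fin n} (hci : c i ≠ 0) :
    (((c i).natDegree + natDegNorm (b i) : ℕ) : WithBot ℕ) ≤ degNorm (∑ k, c k • b k) := by
  classical
  set f : Fin n → ℕ := fun k => (c k).natDegree + natDegNorm (b k)
  obtain ⟨i₀, hi₀, hmax⟩ := (Finset.univ.filter (c · ≠ 0)).exists_max_image f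
    ⟨i, by simpa using hci⟩
  have hm : ∀ k, c k ≠ 0 → f k ≤ f i₀ := fun k hk => hmax k (by simpa using hk)
  set u : Fin n → K := fun k => (c k).coeff (f i₀ - natDegNorm (b k))
  have hu : u ≠ 0 := Function.ne_iff.2 ⟨i₀, by
    simpa [u, f] using (Finset.mem_filter.1 hi₀).2⟩
  obtain ⟨j, hj⟩ := Function.ne_iff.1 (mt (Matrix.eq_zero_of_vecMul_eq_zero hL) hu)
  calc ((f i : ℕ) : WithBot ℕ) ≤ f i₀ := WithBot.coe_le_coe.2 (hm i hci)
    _ ≤ ((∑ k, c k • b k) j).degree := le_degree_of_ne_zero <| by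
      rwa [coeff_sum_smul_eq_vecMul_leadingCoeffMatrix b c hm]
    _ ≤ degNorm (∑ k, c k • b k) := degree_le_degNorm _ j

end RowDegree

theorem reduced_basis_first_is_shortest_general {F : Type*} [Field F] {n : ℕ}
    (hn : 0 < n) (b : Fin n → (Fin n → Polynomial F))
    (hb : LinearIndependent (Polynomial F) b)
    (hred : ∑ i, degNorm (b i) = (Matrix.of b).det.degree)
    (hsorted : Monotone fun i => degNorm (b i))
    (v : Fin n → Polynomial F)
    (hvL : v ∈ Submodule.span (Polynomial F) (Set.range b))
    (hv0 : v ≠ 0) :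
    degNorm (b ⟨0, hn⟩) ≤ degNorm v := by
  obtain ⟨c, rfl⟩ := (Submodule.mem_span_range_iff_exists_fun (Polynomial F)).mp hvL
  obtain ⟨i, hci⟩ : ∃ i, c i ≠ 0 := by
    by_contra! hc
    simp [hc] at hv0
  have hL := det_leadingCoeffMatrix_ne_zero hb.ne_zero hred
  calc degNorm (b ⟨0, hn⟩) ≤ degNorm (b i) := hsorted (Fin.mk_le_of_le_val (Nat.zero_le _))
    _ = natDegNorm (b i) := degNorm_eq_natDegNorm (hb.ne_zero i)
    _ ≤ (((c i).natDegree + natDegNorm (b i) : ℕ) : WithBot ℕ) := by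
      exact_mod_cast Nat.le_add_left _ _
    _ ≤ degNorm (∑ i, c i • b i) := natDegree_add_natDegNorm_le_degNorm_sum_smul hL c hci

/-- **(Lenstra)** If `b_1, …, b_n` is a basis of the lattice `L ⊆ F_q[x]^n` with
orthogonality defect `0` (i.e. `Σ_i |b_i| = deg(det B)`), ordered so that
`|b_1| ≤ … ≤ |b_n|`, then `b_1` is a shortest nonzero vector of `L`. -/
theorem reduced_basis_first_is_shortest {F : Type*} [Field F] [Fintype F] {n : ℕ}
    (hn : 0 < n) (b : Fin n → (Fin n → Polynomial F))
    (hb : LinearIndependent (Polynomial F) b)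
    (hred : ∑ i, degNorm (b i) = (Matrix.of b).det.degree)
    (hsorted : Monotone fun i => degNorm (b i))
    (v : Fin n → Polynomial F)
    (hvL : v ∈ Submodule.span (Polynomial F) (Set.range b))
    (hv0 : v ≠ 0) :
    degNorm (b ⟨0, hn⟩) ≤ degNorm v :=
  reduced_basis_first_is_shortest_general hn b hb hred hsorted v hvL hv0
end

section
/- (Mahler's corollary) Let L ⊆ F_q[x]^n be a lattice of full rank n with covolume covol(L) = deg(det L). Then there exists a nonzero vector v ∈ L with n · |v| ≤ covol(L), i.e., a nonzero lattice vector of degree-norm at most covol(L)/n. -/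
/-!
Let `L` be the lattice spanned by the rows of `B`. By the Smith normal form, `F[x]^n / L` is
isomorphic to `⊕ F[x]/(aᵢ)` with `∏ aᵢ` associated to `det B`, so it is an `F`-vector space of
dimension `d = deg det B`. The polynomial vectors all of whose entries have degree at most
`⌊d / n⌋` form an `F`-space of dimension `n (⌊d / n⌋ + 1) > d`, so some nonzero vector in it maps
to zero in the quotient, i.e. lies in `L`.
-/

open Polynomial Module

theorem finrank_span_range_eq_finrank_pi {R : Type*} [CommRing R] [Nontrivial R]
    {ι : Type*} [Fintype ι] {b : ι → ι → R} (hb : LinearIndependent R b) :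
    finrank R (Submodule.span R (Set.range b)) = finrank R (ι → R) := by
  rw [finrank_span_eq_card hb, Module.finrank_fintype_fun_eq_card]

theorem associated_det_prod_smithNormalFormCoeffs {R : Type*} [CommRing R] [IsDomain R]
    [IsPrincipalIdealRing R] {ι : Type*} [Fintype ι] [DecidableEq ι] {b : ι → ι → R}
    (hb : LinearIndependent R b) :
    Associated (Matrix.of b).det
      (∏ i, Submodule.smithNormalFormCoeffs (Pi.basisFun R ι)
        (finrank_span_range_eq_finrank_pi hb) i) := by
  set h := finrank_span_range_eq_finrank_pi hb
  set std := Pi.basisFun R ι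
  set a := Submodule.smithNormalFormCoeffs std h
  set bM := Submodule.smithNormalFormTopBasis std h
  set bN := Submodule.smithNormalFormBotBasis std h
  set c := Basis.span hb
  -- The alternating map `D` on `L` is compared in its two bases `c` and `bN`.
  set D := std.det.compLinearMap (Submodule.span R (Set.range b)).subtype
  have hDc : D c = (Matrix.of b).det := by
    simp [D, c, Basis.span_apply, ← Pi.basisFun_det_apply, std]
  have hDbN : D bN = (∏ i, a i) * std.det bM := by
    have : (fun i => (bN i : ι → R)) = fun i => a i • bM i :=
      funext (Submodule.smithNormalFormBotBasis_def std h)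
    simp only [D, AlternatingMap.compLinearMap_apply, Submodule.coe_subtype, this]
    exact std.det.map_smul_univ a bM
  have key : (Matrix.of b).det * c.det bN = (∏ i, a i) * std.det bM := by
    rw [← hDc, ← hDbN, ← smul_eq_mul, ← AlternatingMap.smul_apply,
      ← AlternatingMap.eq_smul_basis_det c D]
  exact (associated_mul_unit_right _ _ (c.isUnit_det bN)).trans
    (key ▸ associated_mul_unit_left _ _ (std.isUnit_det bM))

theorem Polynomial.finite_quotient_span_singleton {F : Type*} [Field F] {f : F[X]} (hf : f ≠ 0) :
    Module.Finite F (F[X] ⧸ Ideal.span {f}) :=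
  (AdjoinRoot.powerBasis hf).finite

theorem Polynomial.finrank_degreeLT (F : Type*) [Field F] (k : ℕ) :
    finrank F (degreeLT F k) = k := by
  rw [(degreeLTEquiv F k).finrank_eq, Module.finrank_fin_fun]

section QuotientByRows

variable {F : Type*} [Field F] {ι : Type*} [Fintype ι]

theorem finiteDimensional_quotient_span_range {b : ι → ι → F[X]}
    (hb : LinearIndependent F[X] b) :
    FiniteDimensional F ((ι → F[X]) ⧸ Submodule.span F[X] (Set.range b)) := by
  set h := finrank_span_range_eq_finrank_pi hb
  have := fun i => finite_quotient_span_singleton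
    (Submodule.smithNormalFormCoeffs_ne_zero (Pi.basisFun F[X] ι) h i)
  exact Module.Finite.equiv
    ((Submodule.quotientEquivPiSpan _ (Pi.basisFun F[X] ι) h).restrictScalars F).symm

theorem finrank_quotient_span_range_eq_natDegree_det [DecidableEq ι] {b : ι → ι → F[X]}
    (hb : LinearIndependent F[X] b) :
    finrank F ((ι → F[X]) ⧸ Submodule.span F[X] (Set.range b)) = (Matrix.of b).det.natDegree := by
  set h := finrank_span_range_eq_finrank_pi hb
  have ha := Submodule.smithNormalFormCoeffs_ne_zero (Pi.basisFun F[X] ι) h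
  have := fun i => finite_quotient_span_singleton (ha i)
  rw [Submodule.finrank_quotient_eq_sum F (Pi.basisFun F[X] ι) h,
    natDegree_eq_of_degree_eq (degree_eq_degree_of_associated
      (associated_det_prod_smithNormalFormCoeffs hb)),
    natDegree_prod _ _ fun i _ => ha i]
  simp only [finrank_quotient_span_eq_natDegree]

end QuotientByRows

theorem exists_ne_zero_mem_forall_degree_lt {F : Type*} [Field F] {ι : Type*} [Fintype ι]
    (L : Submodule F[X] (ι → F[X])) [FiniteDimensional F ((ι → F[X]) ⧸ L)] {k : ℕ}
    (hk : finrank F ((ι → F[X]) ⧸ L) < Fintype.card ι * k) :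
    ∃ v ∈ L, v ≠ 0 ∧ ∀ i, (v i).degree < k := by
  let box : (ι → degreeLT F k) →ₗ[F] (ι → F[X]) :=
    LinearMap.piMap fun _ => (degreeLT F k).subtype
  have hbox : Function.Injective box := fun t t' htt' =>
    funext fun i => Subtype.ext (congrFun htt' i)
  have hdim : finrank F (ι → degreeLT F k) = Fintype.card ι * k := by
    simp [Module.finrank_pi_fintype, finrank_degreeLT]
  obtain ⟨t, ht, ht0⟩ := Submodule.exists_mem_ne_zero_of_ne_bot
    (LinearMap.ker_ne_bot_of_finrank_lt (f := L.mkQ.restrictScalars F ∘ₗ box) (hdim ▸ hk))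
  refine ⟨box t, ?_, (map_ne_zero_iff box hbox).mpr ht0, fun i => mem_degreeLT.mp (t i).2⟩
  simpa using ht

theorem mahler_short_vector_general {F : Type*} [Field F] {n : ℕ} (hn : 0 < n)
    (b : Fin n → (Fin n → Polynomial F))
    (hb : LinearIndependent (Polynomial F) b) :
    ∃ v : Fin n → Polynomial F,
      v ∈ Submodule.span (Polynomial F) (Set.range b) ∧ v ≠ 0 ∧
      n • degNorm v ≤ (Matrix.of b).det.degree := by
  classical
  set d := (Matrix.of b).det.natDegree
  have hdet : (Matrix.of b).det ≠ 0 :=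
    Matrix.nonsingular_iff_det_ne_zero.mp (Matrix.Nonsingular.of_linearIndependent_row hb)
  have := finiteDimensional_quotient_span_range hb
  obtain ⟨v, hvL, hv0, hvdeg⟩ := exists_ne_zero_mem_forall_degree_lt _ (k := d / n + 1) (by
    rw [finrank_quotient_span_range_eq_natDegree_det hb, Fintype.card_fin]
    nlinarith [Nat.lt_div_mul_add (a := d) hn])
  refine ⟨v, hvL, hv0, ?_⟩
  have hv : degNorm v ≤ (d / n : ℕ) :=
    Finset.sup_le fun i _ => Order.le_of_lt_succ (hvdeg i)
  calc n • degNorm v ≤ n • ((d / n : ℕ) : WithBot ℕ) := nsmul_le_nsmul_right hv n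
    _ = ((n * (d / n) : ℕ) : WithBot ℕ) := by simp
    _ ≤ d := WithBot.coe_le_coe.mpr (Nat.mul_div_le d n)
    _ = (Matrix.of b).det.degree := (degree_eq_natDegree hdet).symm

/-- **(Mahler's corollary)** Let `L ⊆ F_q[x]^n` be a full-rank lattice, spanned by
linearly independent `b_1, …, b_n`, with covolume `covol(L) = deg(det B)`.  Then
there is a nonzero `v ∈ L` with `n · |v| ≤ covol(L)`. -/
theorem mahler_short_vector {F : Type*} [Field F] [Fintype F] {n : ℕ} (hn : 0 < n)
    (b : Fin n → (Fin n → Polynomial F))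
    (hb : LinearIndependent (Polynomial F) b) :
    ∃ v : Fin n → Polynomial F,
      v ∈ Submodule.span (Polynomial F) (Set.range b) ∧ v ≠ 0 ∧
      n • degNorm v ≤ (Matrix.of b).det.degree :=
  mahler_short_vector_general hn b hb
end
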